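/- arXiv:math/0305088 — 5 statements merged into one kernel-verified Lean document; each statement's English description precedes it below -/
import Mathlib

section
/- Let p, q ∈ ℂ[ξ] be nonzero polynomials and a, b positive integers with a·p(ξ)·q'(ξ) − b·p'(ξ)·q(ξ) ≡ 0. Then p^b = C·q^a for some nonzero constant C. -/
open Polynomial

lemma deriv_info (f : Polynomial ℂ) (hf : f.natDegree ≠ 0) :
    (derivative f).natDegree = f.natDegree - 1 ∧
      (derivative f).leadingCoeff = (f.natDegree : ℂ) * f.leadingCoeff := by
  have hne : f ≠ 0 := fun h => hf (by simp [h])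
  set n := f.natDegree - 1 with hn
  have hn1 : n + 1 = f.natDegree := Nat.succ_pred_eq_of_pos (Nat.pos_of_ne_zero hf)
  have hc : (derivative f).coeff n = (f.natDegree : ℂ) * f.leadingCoeff := by
    rw [coeff_derivative, hn1]
    rw [leadingCoeff, ← hn1]
    push_cast
    ring
  have hcne : (derivative f).coeff n ≠ 0 := by
    rw [hc]
    exact mul_ne_zero (Nat.cast_ne_zero.mpr hf) (leadingCoeff_ne_zero.mpr hne)
  have hdeg : (derivative f).natDegree = n :=
    le_antisymm (natDegree_derivative_le f) (le_natDegree_of_ne_zero hcne)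
  exact ⟨hdeg, by rw [leadingCoeff, hdeg, hc]⟩

lemma deg_eq_of_wronskian (f g : Polynomial ℂ) (hf : f ≠ 0) (hg : g ≠ 0)
    (h : derivative f * g = f * derivative g) : f.natDegree = g.natDegree := by
  by_cases hf' : derivative f = 0
  · have hg' : derivative g = 0 := by
      have : f * derivative g = 0 := by rw [← h, hf', zero_mul]
      exact (mul_eq_zero.mp this).resolve_left hf
    rw [natDegree_eq_zero_of_derivative_eq_zero hf',
      natDegree_eq_zero_of_derivative_eq_zero hg']
  · have hg' : derivative g ≠ 0 := by
      intro h0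
      rw [h0, mul_zero] at h
      exact (mul_eq_zero.mp h).elim hf' hg
    have hfd : f.natDegree ≠ 0 := fun h0 => hf' (by
      rw [eq_C_of_natDegree_eq_zero h0]; simp)
    have hgd : g.natDegree ≠ 0 := fun h0 => hg' (by
      rw [eq_C_of_natDegree_eq_zero h0]; simp)
    obtain ⟨-, hlf⟩ := deriv_info f hfd
    obtain ⟨-, hlg⟩ := deriv_info g hgd
    have hlc : (derivative f * g).leadingCoeff = (f * derivative g).leadingCoeff := by rw [h]
    rw [leadingCoeff_mul, leadingCoeff_mul, hlf, hlg] at hlc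
    have hlfne := leadingCoeff_ne_zero.mpr hf
    have hlgne := leadingCoeff_ne_zero.mpr hg
    have h2 : (f.natDegree : ℂ) * (f.leadingCoeff * g.leadingCoeff)
        = (g.natDegree : ℂ) * (f.leadingCoeff * g.leadingCoeff) := by linear_combination hlc
    exact_mod_cast mul_right_cancel₀ (mul_ne_zero hlfne hlgne) h2

lemma wronskian_eq (f g : Polynomial ℂ) (hf : f ≠ 0) (hg : g ≠ 0)
    (h : derivative f * g = f * derivative g) :
    C g.leadingCoeff * f = C f.leadingCoeff * g := by
  by_contra hne
  set h0 : Polynomial ℂ := C g.leadingCoeff * f - C f.leadingCoeff * g with hh0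
  have hh0ne : h0 ≠ 0 := sub_ne_zero_of_ne hne
  have hw : derivative h0 * g = h0 * derivative g := by
    have hd : derivative h0 = C g.leadingCoeff * derivative f - C f.leadingCoeff * derivative g := by
      rw [hh0]; simp
    rw [hd, hh0]
    linear_combination C g.leadingCoeff * h
  have hdeq := deg_eq_of_wronskian h0 g hh0ne hg hw
  have hdfg := deg_eq_of_wronskian f g hf hg h
  have hlt : h0.degree < g.degree := by
    have h1 : (C g.leadingCoeff * f).degree = (C f.leadingCoeff * g).degree := by
      rw [degree_C_mul (leadingCoeff_ne_zero.mpr hg), degree_C_mul (leadingCoeff_ne_zero.mpr hf),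
        degree_eq_natDegree hf, degree_eq_natDegree hg, hdfg]
    have h2 : C g.leadingCoeff * f ≠ 0 :=
      mul_ne_zero (fun h => (leadingCoeff_ne_zero.mpr hg) (by simpa using h)) hf
    have h3 : (C g.leadingCoeff * f).leadingCoeff = (C f.leadingCoeff * g).leadingCoeff := by
      simp [leadingCoeff_mul, mul_comm]
    have := degree_sub_lt h1 h2 h3
    rwa [degree_C_mul (leadingCoeff_ne_zero.mpr hg), degree_eq_natDegree hf,
      hdfg, ← degree_eq_natDegree hg] at this
  rw [degree_eq_natDegree hh0ne, degree_eq_natDegree hg, hdeq] at hlt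
  exact lt_irrefl _ hlt

/-- If `p, q ∈ ℂ[ξ]` are nonzero, `a, b > 0` and
`a·p·q' − b·p'·q = 0`, then `p^b = C·q^a` for some nonzero constant `C`. -/
theorem stmt_1 (p q : Polynomial ℂ) (hp : p ≠ 0) (hq : q ≠ 0)
    (a b : ℕ) (ha : 0 < a) (hb : 0 < b)
    (hJ : (a : ℂ) • (p * derivative q) - (b : ℂ) • (derivative p * q) = 0) :
    ∃ c : ℂ, c ≠ 0 ∧ p ^ b = C c * q ^ a := by
  obtain ⟨a', rfl⟩ : ∃ a', a = a' + 1 := ⟨a - 1, (Nat.succ_pred_eq_of_pos ha).symm⟩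
  obtain ⟨b', rfl⟩ : ∃ b', b = b' + 1 := ⟨b - 1, (Nat.succ_pred_eq_of_pos hb).symm⟩
  set f := p ^ (b' + 1) with hf
  set g := q ^ (a' + 1) with hg
  have hfne : f ≠ 0 := pow_ne_zero _ hp
  have hgne : g ≠ 0 := pow_ne_zero _ hq
  have hJ' : ((a' + 1 : ℕ) : ℂ) • (p * derivative q) = ((b' + 1 : ℕ) : ℂ) • (derivative p * q) :=
    sub_eq_zero.mp hJ
  have hJ'' : (C ((a' + 1 : ℕ) : ℂ)) * (p * derivative q) = (C ((b' + 1 : ℕ) : ℂ)) * (derivative p * q) := by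
    rw [← smul_eq_C_mul, ← smul_eq_C_mul]; exact hJ'
  have hw : derivative f * g = f * derivative g := by
    rw [hf, hg, derivative_pow, derivative_pow]
    simp only [Nat.add_sub_cancel]
    linear_combination -(p ^ b' * q ^ a') * hJ''
  have key := wronskian_eq f g hfne hgne hw
  refine ⟨f.leadingCoeff / g.leadingCoeff, ?_, ?_⟩
  · exact div_ne_zero (leadingCoeff_ne_zero.mpr hfne) (leadingCoeff_ne_zero.mpr hgne)
  · have hglc : (C g.leadingCoeff : Polynomial ℂ) ≠ 0 := by
      simpa using leadingCoeff_ne_zero.mpr hgne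
    apply mul_left_cancel₀ hglc
    rw [key, ← mul_assoc, ← C_mul, mul_div_cancel₀ _ (leadingCoeff_ne_zero.mpr hgne)]
end

section
/- Let φ(x,ξ) be a finite fractional power series φ(x,ξ) = Σ_{k=1}^{K−1} a_k x^{1−k/m} + ξ x^{1−K/m} and suppose f(x, φ(x,ξ)) = f_φ(ξ) + lower order terms in x with f_φ : ℂ → ℂ² a polynomial map of positive degree. Then f_φ(ℂ) ⊆ A_f. -/
open MvPolynomial Filter Topology

/-!
Along the curve `t ↦ (t^{-m}, φ(t^{-m}, ξ))` the first coordinate escapes to infinity as `t → 0`,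
while by hypothesis `f` converges to `f_φ(ξ)` along it; sampling the curve at a sequence `tᵢ → 0`
exhibits `f_φ(ξ)` as a limit of `f` along a sequence going to infinity.
-/

/-- For a polynomial map `f : ℂ² → ℂ²` this is the non-proper value set `A_f`. -/
def nonProperValues {E F : Type*} [Norm E] [TopologicalSpace F] (f : E → F) : Set F :=
  {v | ∃ s : ℕ → E, Tendsto (fun i => ‖s i‖) atTop atTop ∧ Tendsto (f ∘ s) atTop (𝓝 v)}

theorem mem_nonProperValues_of_tendsto {ι E F : Type*} [Norm E] [TopologicalSpace F]
    {f : E → F} {l : Filter ι} [l.IsCountablyGenerated] [l.NeBot] {c : ι → E} {v : F}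
    (hc : Tendsto (fun t => ‖c t‖) l atTop) (hf : Tendsto (f ∘ c) l (𝓝 v)) :
    v ∈ nonProperValues f := by
  obtain ⟨x, hx⟩ := exists_seq_tendsto l
  exact ⟨c ∘ x, hc.comp hx, hf.comp hx⟩

theorem tendsto_norm_zpow_prod_nhdsNE_zero {𝕜 E : Type*} [NontriviallyNormedField 𝕜]
    [SeminormedAddCommGroup E] {n : ℤ} (hn : n < 0) (y : 𝕜 → E) :
    Tendsto (fun t : 𝕜 => ‖(t ^ n, y t)‖) (𝓝[≠] 0) atTop :=
  tendsto_atTop_mono (fun _ => norm_fst_le _)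
    (tendsto_norm_cobounded_atTop.comp (tendsto_zpow_nhdsNE_zero_cobounded hn))

theorem stmt_11_general (P Q : MvPolynomial (Fin 2) ℂ)
    (m K : ℕ) (hm : 0 < m) (a : ℕ → ℂ)
    (pφ qφ : Polynomial ℂ)
    (hlim : ∀ ξ : ℂ, Tendsto (fun t : ℂ =>
        (eval ![t ^ (-(m : ℤ)),
              (∑ k ∈ Finset.Icc 1 (K - 1), a k * t ^ ((k : ℤ) - (m : ℤ)))
                + ξ * t ^ ((K : ℤ) - (m : ℤ))] P,
         eval ![t ^ (-(m : ℤ)),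
              (∑ k ∈ Finset.Icc 1 (K - 1), a k * t ^ ((k : ℤ) - (m : ℤ)))
                + ξ * t ^ ((K : ℤ) - (m : ℤ))] Q))
      (nhdsWithin 0 {0}ᶜ) (nhds (pφ.eval ξ, qφ.eval ξ))) :
    ∀ ξ : ℂ, (pφ.eval ξ, qφ.eval ξ) ∈ {v : ℂ × ℂ | ∃ s : ℕ → ℂ × ℂ,
      Tendsto (fun i => ‖s i‖) atTop atTop ∧
      Tendsto (fun i => (eval ![(s i).1, (s i).2] P, eval ![(s i).1, (s i).2] Q))
        atTop (nhds v)} := fun ξ =>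
  mem_nonProperValues_of_tendsto (f := fun z : ℂ × ℂ => (eval ![z.1, z.2] P, eval ![z.1, z.2] Q))
    (tendsto_norm_zpow_prod_nhdsNE_zero (by omega) _) (hlim ξ)

/-- Let `φ(x,ξ) = Σ_{k=1}^{K−1} a_k x^{1−k/m} + ξ x^{1−K/m}` be a finite
fractional power series (written via the substitution `x = t^{−m}`, `t → 0`), and
suppose `f(x, φ(x,ξ)) = f_φ(ξ) + (lower order terms in x)` with `f_φ = (p_φ, q_φ)` a
polynomial map of positive degree. Then `f_φ(ℂ) ⊆ A_f`, the non-proper value set. -/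
theorem stmt_11 (P Q : MvPolynomial (Fin 2) ℂ)
    (hdom : Dense (Set.range fun z : ℂ × ℂ => (eval ![z.1, z.2] P, eval ![z.1, z.2] Q)))
    (m K : ℕ) (hm : 0 < m) (a : ℕ → ℂ)
    (pφ qφ : Polynomial ℂ) (hdegφ : 0 < max pφ.natDegree qφ.natDegree)
    (hlim : ∀ ξ : ℂ, Tendsto (fun t : ℂ =>
        (eval ![t ^ (-(m : ℤ)),
              (∑ k ∈ Finset.Icc 1 (K - 1), a k * t ^ ((k : ℤ) - (m : ℤ)))
                + ξ * t ^ ((K : ℤ) - (m : ℤ))] P,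
         eval ![t ^ (-(m : ℤ)),
              (∑ k ∈ Finset.Icc 1 (K - 1), a k * t ^ ((k : ℤ) - (m : ℤ)))
                + ξ * t ^ ((K : ℤ) - (m : ℤ))] Q))
      (nhdsWithin 0 {0}ᶜ) (nhds (pφ.eval ξ, qφ.eval ξ))) :
    ∀ ξ : ℂ, (pφ.eval ξ, qφ.eval ξ) ∈ {v : ℂ × ℂ | ∃ s : ℕ → ℂ × ℂ,
      Tendsto (fun i => ‖s i‖) atTop atTop ∧
      Tendsto (fun i => (eval ![(s i).1, (s i).2] P, eval ![(s i).1, (s i).2] Q))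
        atTop (nhds v)} :=
  stmt_11_general P Q m K hm a pφ qφ hlim
end

section
/- Let P_+ and Q_+ be the leading homogeneous components of P and Q with deg P = Kd > 1, deg Q = Ke > 1, gcd(d,e)=1, and suppose J(P,Q) is a nonzero constant. If P_+ and Q_+ have a common zero other than the origin, then P_+^e = c · Q_+^d for some constant c ∈ ℂ*. -/
/-!
The top homogeneous part of `J(P, Q)` is `J(P₊, Q₊)`, of degree `Kd + Ke - 2 > 0`, so a constant
Jacobian forces `J(P₊, Q₊) = 0`. Together with Euler's identity this gives
`d P₊ ∂ₓQ₊ = e Q₊ ∂ₓP₊`, hence `∂ₓ(P₊^e) Q₊^d = P₊^e ∂ₓ(Q₊^d)`. Setting `y = 1`, the Wronskian of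
`P₊(x,1)^e` and `Q₊(x,1)^d` vanishes, so these are proportional; since `P₊^e` and `Q₊^d` are forms
of the same degree `Kde`, homogenizing back gives `P₊^e = c Q₊^d`.
-/

open MvPolynomial

namespace Polynomial

variable {K : Type*} [Field K] [CharZero K]

theorem exists_eq_C_mul_of_wronskian_eq_zero {a b : K[X]} (hb : b ≠ 0)
    (hw : wronskian a b = 0) : ∃ c, a = C c * b := by
  classical
  -- after dividing out the gcd, coprime polynomials with vanishing Wronskian are constants
  obtain ⟨a₁, b₁, ha, hb₁, hu⟩ := extract_gcd a b
  set g := gcd a b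
  have hg : g ≠ 0 := fun h0 => hb (by rw [hb₁, h0, zero_mul])
  have hcop : IsCoprime a₁ b₁ := (gcd_isUnit_iff_isRelPrime.mp hu).isCoprime
  have hw₁ : wronskian a₁ b₁ = 0 := by
    have : wronskian a b = g ^ 2 * wronskian a₁ b₁ := by
      rw [ha, hb₁]; simp only [wronskian, derivative_mul]; ring
    simpa [this, hg] using hw
  obtain ⟨ha₁, hb₁'⟩ := hcop.wronskian_eq_zero_iff.mp hw₁
  rw [derivative_eq_zero] at ha₁ hb₁'
  rw [eq_C_of_natDegree_eq_zero ha₁] at ha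
  rw [eq_C_of_natDegree_eq_zero hb₁'] at hb₁
  have hβ : b₁.coeff 0 ≠ 0 := fun h0 => hb (by rw [hb₁, h0, C_0, mul_zero])
  refine ⟨a₁.coeff 0 / b₁.coeff 0, ?_⟩
  rw [ha, hb₁, mul_left_comm, ← C_mul, div_mul_cancel₀ _ hβ]

end Polynomial

namespace MvPolynomial

section CommSemiring

variable {σ R : Type*} [CommSemiring R]

theorem totalDegree_pderiv_le (i : σ) (p : MvPolynomial σ R) :
    (pderiv i p).totalDegree ≤ p.totalDegree - 1 := by
  conv_lhs => rw [← sum_homogeneousComponent p, map_sum]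
  refine (totalDegree_finsetSum _ _).trans (Finset.sup_le fun k hk => ?_)
  rw [Finset.mem_range] at hk
  exact (homogeneousComponent_isHomogeneous k p).pderiv.totalDegree_le.trans (by omega)

theorem derivative_aeval_X_one (f : MvPolynomial (Fin 2) R) :
    Polynomial.derivative (aeval ![(Polynomial.X : Polynomial R), 1] f) =
      aeval ![Polynomial.X, 1] (pderiv 0 f) := by
  induction f using MvPolynomial.induction_on with
  | C a => simp
  | add p q hp hq => simp [hp, hq]
  | mul_X p i hp =>
    rw [map_mul, Polynomial.derivative_mul, pderiv_mul, map_add, map_mul, map_mul, hp]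
    fin_cases i <;> simp

end CommSemiring

section CommRing

variable {σ R : Type*} [CommRing R]

theorem totalDegree_sub_homogeneousComponent_le {p : MvPolynomial σ R} {n : ℕ}
    (hp : p.totalDegree ≤ n) : (p - homogeneousComponent n p).totalDegree ≤ n - 1 := by
  refine Finset.sup_le fun s hs => ?_
  rw [mem_support_iff, coeff_sub, coeff_homogeneousComponent] at hs
  by_cases hsn : s.degree = n
  · simp [hsn] at hs
  · rw [if_neg hsn, sub_zero] at hs
    have := (le_totalDegree (mem_support_iff.mpr hs)).trans hp
    change s.degree ≤ n at this
    change s.degree ≤ n - 1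
    omega

theorem homogeneousComponent_totalDegree_ne_zero {p : MvPolynomial σ R} (hp : 0 < p.totalDegree) :
    homogeneousComponent p.totalDegree p ≠ 0 := fun h => by
  have := totalDegree_sub_homogeneousComponent_le le_rfl (p := p)
  rw [h, sub_zero] at this
  omega

variable {F G P Q : MvPolynomial (Fin 2) R}

noncomputable def jacobian (P Q : MvPolynomial (Fin 2) R) : MvPolynomial (Fin 2) R :=
  pderiv 0 P * pderiv 1 Q - pderiv 1 P * pderiv 0 Q

theorem totalDegree_jacobian_le (P Q : MvPolynomial (Fin 2) R) :
    (jacobian P Q).totalDegree ≤ (P.totalDegree - 1) + (Q.totalDegree - 1) := by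
  have h : ∀ i j,
      (pderiv i P * pderiv j Q).totalDegree ≤ (P.totalDegree - 1) + (Q.totalDegree - 1) :=
    fun i j => (totalDegree_mul _ _).trans
      (add_le_add (totalDegree_pderiv_le i P) (totalDegree_pderiv_le j Q))
  exact (totalDegree_sub _ _).trans (max_le (h 0 1) (h 1 0))

theorem isHomogeneous_jacobian {m n : ℕ} (hF : F.IsHomogeneous m) (hG : G.IsHomogeneous n) :
    (jacobian F G).IsHomogeneous (m - 1 + (n - 1)) :=
  (hF.pderiv.mul hG.pderiv).sub (hF.pderiv.mul hG.pderiv)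

theorem homogeneousComponent_jacobian {p q : ℕ} (hp : 2 ≤ p) (hq : 2 ≤ q)
    (hP : P.totalDegree ≤ p) (hQ : Q.totalDegree ≤ q) :
    homogeneousComponent (p + q - 2) (jacobian P Q) =
      jacobian (homogeneousComponent p P) (homogeneousComponent q Q) := by
  set F := homogeneousComponent p P
  set G := homogeneousComponent q Q
  have hFG : (jacobian F G).IsHomogeneous (p + q - 2) := by
    rw [show p + q - 2 = p - 1 + (q - 1) by omega]
    exact isHomogeneous_jacobian (homogeneousComponent_isHomogeneous p P)
      (homogeneousComponent_isHomogeneous q Q)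
  have hrest : (jacobian (P - F) Q + jacobian F (Q - G)).totalDegree < p + q - 2 := by
    have hF : F.totalDegree ≤ p := (homogeneousComponent_isHomogeneous p P).totalDegree_le
    have hPF : (P - F).totalDegree ≤ p - 1 := totalDegree_sub_homogeneousComponent_le hP
    have hQG : (Q - G).totalDegree ≤ q - 1 := totalDegree_sub_homogeneousComponent_le hQ
    have h₁ : (jacobian (P - F) Q).totalDegree < p + q - 2 :=
      (totalDegree_jacobian_le _ _).trans_lt (by omega)
    have h₂ : (jacobian F (Q - G)).totalDegree < p + q - 2 :=
      (totalDegree_jacobian_le _ _).trans_lt (by omega)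
    exact (totalDegree_add _ _).trans_lt (max_lt h₁ h₂)
  have hsplit : jacobian P Q = jacobian F G + (jacobian (P - F) Q + jacobian F (Q - G)) := by
    simp only [MvPolynomial.jacobian, map_sub]
    ring
  rw [hsplit, map_add, homogeneousComponent_eq_self hFG, homogeneousComponent_eq_zero _ _ hrest,
    add_zero]

theorem jacobian_homogeneousComponent_eq_zero_of_eq_C {p q : ℕ} (hp : 2 ≤ p) (hq : 2 ≤ q)
    (hP : P.totalDegree ≤ p) (hQ : Q.totalDegree ≤ q) {c : R} (hJ : jacobian P Q = C c) :
    jacobian (homogeneousComponent p P) (homogeneousComponent q Q) = 0 := by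
  rw [← homogeneousComponent_jacobian hp hq hP hQ, hJ, homogeneousComponent_eq_zero]
  rw [totalDegree_C]
  omega

theorem IsHomogeneous.mul_pderiv_eq_of_jacobian_eq_zero {m n : ℕ} (hF : F.IsHomogeneous m)
    (hG : G.IsHomogeneous n) (hJ : jacobian F G = 0) :
    (m : MvPolynomial (Fin 2) R) * F * pderiv 0 G = n * G * pderiv 0 F := by
  have hEulerF := hF.sum_X_mul_pderiv
  have hEulerG := hG.sum_X_mul_pderiv
  rw [Fin.sum_univ_two, nsmul_eq_mul] at hEulerF hEulerG
  rw [jacobian] at hJ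
  linear_combination -(pderiv 0 G) * hEulerF + pderiv 0 F * hEulerG - X 1 * hJ

end CommRing

theorem pderiv_pow_mul_pow_eq {σ R : Type*} [CommRing R] {F G : MvPolynomial σ R} {i : σ}
    {d e : ℕ} (hd : 0 < d) (he : 0 < e)
    (h : (d : MvPolynomial σ R) * F * pderiv i G = e * G * pderiv i F) :
    pderiv i (F ^ e) * G ^ d = F ^ e * pderiv i (G ^ d) := by
  obtain ⟨d, rfl⟩ : ∃ d', d = d' + 1 := ⟨d - 1, by omega⟩
  obtain ⟨e, rfl⟩ : ∃ e', e = e' + 1 := ⟨e - 1, by omega⟩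
  rw [pderiv_pow, pderiv_pow, add_tsub_cancel_right, add_tsub_cancel_right]
  linear_combination -(F ^ e * G ^ d) * h

section Field

variable {K : Type*} [Field K] [CharZero K]

theorem IsHomogeneous.exists_eq_C_mul_of_pderiv_mul_eq {A B : MvPolynomial (Fin 2) K} {N : ℕ}
    (hA : A.IsHomogeneous N) (hB : B.IsHomogeneous N) (hB0 : B ≠ 0)
    (h : pderiv 0 A * B = A * pderiv 0 B) : ∃ c, A = C c * B := by
  set a := MvPolynomial.aeval ![(Polynomial.X : Polynomial K), 1] A
  set b := MvPolynomial.aeval ![(Polynomial.X : Polynomial K), 1] B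
  have ha : a.homogenize N = A := Polynomial.homogenize_eq_of_isHomogeneous hA rfl
  have hb : b.homogenize N = B := Polynomial.homogenize_eq_of_isHomogeneous hB rfl
  have hb0 : b ≠ 0 := by
    rintro h0
    rw [h0, Polynomial.homogenize_zero] at hb
    exact hB0 hb.symm
  have hw : a.wronskian b = 0 := by
    rw [Polynomial.wronskian, derivative_aeval_X_one, derivative_aeval_X_one, ← map_mul,
      ← map_mul, ← h, sub_self]
  obtain ⟨c, hc⟩ := Polynomial.exists_eq_C_mul_of_wronskian_eq_zero hb0 hw
  exact ⟨c, by rw [← ha, ← hb, hc, Polynomial.homogenize_C_mul]⟩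

theorem IsHomogeneous.exists_pow_eq_C_mul_pow_of_jacobian_eq_zero {F G : MvPolynomial (Fin 2) K}
    {k d e : ℕ} (hk : 0 < k) (hd : 0 < d) (he : 0 < e) (hF : F.IsHomogeneous (k * d))
    (hG : G.IsHomogeneous (k * e)) (hG0 : G ≠ 0) (hJ : jacobian F G = 0) :
    ∃ c, F ^ e = C c * G ^ d := by
  have hEuler := hF.mul_pderiv_eq_of_jacobian_eq_zero hG hJ
  have hk0 : (k : MvPolynomial (Fin 2) K) ≠ 0 := Nat.cast_ne_zero.mpr hk.ne'
  have hratio : (d : MvPolynomial (Fin 2) K) * F * pderiv 0 G = e * G * pderiv 0 F := by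
    apply mul_left_cancel₀ hk0
    push_cast at hEuler
    linear_combination hEuler
  have hGd : (G ^ d).IsHomogeneous (k * d * e) := by
    simpa only [mul_right_comm] using hG.pow d
  exact (hF.pow e).exists_eq_C_mul_of_pderiv_mul_eq hGd (pow_ne_zero d hG0)
    (pderiv_pow_mul_pow_eq hd he hratio)

end Field

end MvPolynomial

theorem stmt_15_general (P Q : MvPolynomial (Fin 2) ℂ) (K d e : ℕ)
    (hK : 0 < K) (hd : 0 < d) (he : 0 < e)
    (hP : P.totalDegree = K * d) (hQ : Q.totalDegree = K * e)
    (hP1 : 1 < K * d) (hQ1 : 1 < K * e)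
    (c₀ : ℂ)
    (hJ : pderiv 0 P * pderiv 1 Q - pderiv 1 P * pderiv 0 Q = C c₀) :
    ∃ c : ℂ, c ≠ 0 ∧
      (homogeneousComponent (K * d) P) ^ e = C c * (homogeneousComponent (K * e) Q) ^ d := by
  have hF0 : homogeneousComponent (K * d) P ≠ 0 :=
    hP ▸ homogeneousComponent_totalDegree_ne_zero (by omega)
  have hG0 : homogeneousComponent (K * e) Q ≠ 0 :=
    hQ ▸ homogeneousComponent_totalDegree_ne_zero (by omega)
  have hJtop := jacobian_homogeneousComponent_eq_zero_of_eq_C hP1 hQ1 hP.le hQ.le hJ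
  obtain ⟨c, hc⟩ :=
    (homogeneousComponent_isHomogeneous _ _).exists_pow_eq_C_mul_pow_of_jacobian_eq_zero
      hK hd he (homogeneousComponent_isHomogeneous _ _) hG0 hJtop
  refine ⟨c, fun hc0 => pow_ne_zero e hF0 ?_, hc⟩
  rw [hc, hc0, C_0, zero_mul]

/-- Let `P_+`, `Q_+` be the leading homogeneous components of `P`, `Q`
with `deg P = Kd > 1`, `deg Q = Ke > 1`, `gcd(d,e) = 1`, and `J(P,Q)` a nonzero
constant. If `P_+` and `Q_+` have a common zero other than the origin, then
`P_+^e = c·Q_+^d` for some `c ∈ ℂ*`. -/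
theorem stmt_15 (P Q : MvPolynomial (Fin 2) ℂ) (K d e : ℕ)
    (hK : 0 < K) (hd : 0 < d) (he : 0 < e) (hcop : Nat.Coprime d e)
    (hP : P.totalDegree = K * d) (hQ : Q.totalDegree = K * e)
    (hP1 : 1 < K * d) (hQ1 : 1 < K * e)
    (c₀ : ℂ) (hc₀ : c₀ ≠ 0)
    (hJ : pderiv 0 P * pderiv 1 Q - pderiv 1 P * pderiv 0 Q = C c₀)
    (z : ℂ × ℂ) (hz : z ≠ 0)
    (hPz : eval ![z.1, z.2] (homogeneousComponent (K * d) P) = 0)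
    (hQz : eval ![z.1, z.2] (homogeneousComponent (K * e) Q) = 0) :
    ∃ c : ℂ, c ≠ 0 ∧
      (homogeneousComponent (K * d) P) ^ e = C c * (homogeneousComponent (K * e) Q) ^ d :=
  stmt_15_general P Q K d e hK hd he hP hQ hP1 hQ1 c₀ hJ
end

section
/- Let P, Q ∈ ℂ[x,y] be nonzero homogeneous polynomials of degrees m, n > 0 respectively with P_x Q_y − P_y Q_x ≡ 0. Then P^n = c·Q^m for some c ∈ ℂ*. -/
open MvPolynomial

private lemma eq_add_single' {i : Fin 2} {s : Fin 2 →₀ ℕ} (hsi : s i ≠ 0) :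
    s = (s - Finsupp.single i 1) + Finsupp.single i 1 := by
  ext j
  rw [Finsupp.add_apply, Finsupp.tsub_apply, Finsupp.single_apply]
  by_cases hj : i = j
  · subst hj; rw [if_pos rfl]; omega
  · simp [hj]

private lemma coeff_pderiv' (i : Fin 2) (q : MvPolynomial (Fin 2) ℂ) (d : Fin 2 →₀ ℕ) :
    coeff d (pderiv i q) = ((d i + 1 : ℕ) : ℂ) * coeff (d + Finsupp.single i 1) q := by
  induction q using MvPolynomial.induction_on' with
  | add p q hp hq => simp only [map_add, coeff_add, hp, hq]; ring
  | monomial s a =>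
    rw [pderiv_monomial, coeff_monomial, coeff_monomial]
    by_cases h : s = d + Finsupp.single i 1
    · subst h
      have h1 : (d + Finsupp.single i 1) - Finsupp.single i 1 = d := by
        ext j
        rw [Finsupp.tsub_apply, Finsupp.add_apply, Finsupp.single_apply]
        omega
      have h2 : ((d + Finsupp.single i 1 : Fin 2 →₀ ℕ)) i = d i + 1 := by
        rw [Finsupp.add_apply, Finsupp.single_apply, if_pos rfl]
      rw [if_pos h1, if_pos rfl, h2]; push_cast; ring
    · rw [if_neg h]
      by_cases hsi : s i = 0
      · simp [hsi]
      · have hne : s - Finsupp.single i 1 ≠ d := fun hc => h (by rw [eq_add_single' hsi, hc])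
        rw [if_neg hne]; ring

private lemma coeff_X_mul_pderiv' (i : Fin 2) (f : MvPolynomial (Fin 2) ℂ) (d : Fin 2 →₀ ℕ) :
    coeff d (X i * pderiv i f) = ((d i : ℕ) : ℂ) * coeff d f := by
  classical
  rw [coeff_X_mul']
  by_cases h : i ∈ d.support
  · rw [if_pos h, coeff_pderiv', ← eq_add_single' (Finsupp.mem_support_iff.mp h)]
    congr 2
    have hdi := Finsupp.mem_support_iff.mp h
    rw [Finsupp.tsub_apply, Finsupp.single_apply, if_pos rfl]
    omega
  · rw [if_neg h]
    have h0 : d i = 0 := Finsupp.notMem_support_iff.mp h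
    rw [h0]; simp

private lemma euler' {P : MvPolynomial (Fin 2) ℂ} {m : ℕ} (hP : P.IsHomogeneous m) :
    X 0 * pderiv 0 P + X 1 * pderiv 1 P = C (m : ℂ) * P := by
  apply MvPolynomial.ext
  intro d
  rw [coeff_add, coeff_C_mul, coeff_X_mul_pderiv', coeff_X_mul_pderiv']
  by_cases hc : coeff d P = 0
  · rw [hc]; ring
  · have hw := hP hc
    rw [show (Finsupp.weight 1 : (Fin 2 →₀ ℕ) →+ ℕ) = Finsupp.weight (fun _ => 1) from rfl,
      ← Finsupp.degree_eq_weight_one (R := ℕ)] at hw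
    have hdeg : d 0 + d 1 = m := by
      rw [← hw, Finsupp.degree_apply]
      have : (∑ j ∈ d.support, d j) = ∑ j : Fin 2, d j :=
        Finset.sum_subset (Finset.subset_univ _)
          (fun j _ hj => Finsupp.notMem_support_iff.mp hj)
      rw [this, Fin.sum_univ_two]
    rw [← hdeg]; push_cast; ring

private lemma eq_C_of_pderiv' (q : MvPolynomial (Fin 2) ℂ) (h0 : pderiv 0 q = 0)
    (h1 : pderiv 1 q = 0) : q = C (coeff 0 q) := by
  apply MvPolynomial.ext
  intro d
  rw [coeff_C]
  split_ifs with hd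
  · rw [← hd]
  · have hex : ∃ i, d i ≠ 0 := by
      by_contra hall
      push_neg at hall
      exact hd (Finsupp.ext fun j => (hall j)).symm
    obtain ⟨i, hi⟩ := hex
    have h := coeff_pderiv' i q (d - Finsupp.single i 1)
    rw [← eq_add_single' hi] at h
    have hz : pderiv i q = 0 := by fin_cases i <;> assumption
    rw [hz, coeff_zero] at h
    exact (mul_eq_zero.mp h.symm).resolve_left
      (by push_cast; exact Nat.cast_add_one_ne_zero _)

private lemma deg2' (d : Fin 2 →₀ ℕ) : (d.sum fun _ e => e) = d 0 + d 1 := by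
  rw [Finsupp.sum_fintype _ _ (fun _ => rfl), Fin.sum_univ_two]

private lemma le_totalDegree_mul' {a b : MvPolynomial (Fin 2) ℂ} (ha : a ≠ 0) (hb : b ≠ 0) :
    a.totalDegree + b.totalDegree ≤ (a * b).totalDegree := by
  classical
  obtain ⟨d0, hd0, hd0e⟩ := Finset.exists_mem_eq_sup a.support
    (support_nonempty.mpr ha) (fun s => s.sum fun _ e => e)
  obtain ⟨e0, he0, he0e⟩ := Finset.exists_mem_eq_sup b.support
    (support_nonempty.mpr hb) (fun s => s.sum fun _ e => e)
  set Sa := a.support.filter (fun s => s 0 + s 1 = a.totalDegree) with hSa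
  set Sb := b.support.filter (fun s => s 0 + s 1 = b.totalDegree) with hSb
  have hd0' : d0 ∈ Sa := by
    rw [hSa, Finset.mem_filter]
    exact ⟨hd0, by rw [← deg2', ← hd0e]; rfl⟩
  have he0' : e0 ∈ Sb := by
    rw [hSb, Finset.mem_filter]
    exact ⟨he0, by rw [← deg2', ← he0e]; rfl⟩
  obtain ⟨d, hd, hdmax⟩ := Sa.exists_max_image (fun s => s 0) ⟨d0, hd0'⟩
  obtain ⟨e, he, hemax⟩ := Sb.exists_max_image (fun s => s 0) ⟨e0, he0'⟩
  rw [hSa, Finset.mem_filter] at hd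
  rw [hSb, Finset.mem_filter] at he
  have hcoeff : coeff (d + e) (a * b) = coeff d a * coeff e b := by
    rw [coeff_mul]
    apply Finset.sum_eq_single_of_mem (d, e)
    · rw [Finset.HasAntidiagonal.mem_antidiagonal]
    · rintro ⟨p1, p2⟩ hmem hne
      rw [Finset.HasAntidiagonal.mem_antidiagonal] at hmem
      by_contra hc
      have hp1 : coeff p1 a ≠ 0 := fun h => hc (by simp [h])
      have hp2 : coeff p2 b ≠ 0 := fun h => hc (by simp [h])
      have hA : p1 0 + p1 1 ≤ a.totalDegree := by
        rw [← deg2']; exact le_totalDegree (mem_support_iff.mpr hp1)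
      have hB : p2 0 + p2 1 ≤ b.totalDegree := by
        rw [← deg2']; exact le_totalDegree (mem_support_iff.mpr hp2)
      have hs0 : p1 0 + p2 0 = d 0 + e 0 := by
        have := congrArg (fun f : Fin 2 →₀ ℕ => f 0) hmem; simpa using this
      have hs1 : p1 1 + p2 1 = d 1 + e 1 := by
        have := congrArg (fun f : Fin 2 →₀ ℕ => f 1) hmem; simpa using this
      have hdA : p1 0 + p1 1 = a.totalDegree := by omega
      have hdB : p2 0 + p2 1 = b.totalDegree := by omega
      have hp1S : p1 ∈ Sa := by
        rw [hSa, Finset.mem_filter]; exact ⟨mem_support_iff.mpr hp1, hdA⟩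
      have hp2S : p2 ∈ Sb := by
        rw [hSb, Finset.mem_filter]; exact ⟨mem_support_iff.mpr hp2, hdB⟩
      have m1 := hdmax p1 hp1S
      have m2 := hemax p2 hp2S
      have e10 : p1 0 = d 0 := by omega
      have e11 : p1 1 = d 1 := by omega
      have e20 : p2 0 = e 0 := by omega
      have e21 : p2 1 = e 1 := by omega
      apply hne
      have hp1d : p1 = d := by
        ext j; fin_cases j
        · exact e10
        · exact e11
      have hp2e : p2 = e := by
        ext j; fin_cases j
        · exact e20
        · exact e21
      rw [hp1d, hp2e]
  have hne : coeff (d + e) (a * b) ≠ 0 :=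
    hcoeff ▸ mul_ne_zero (mem_support_iff.mp hd.1) (mem_support_iff.mp he.1)
  have hle := le_totalDegree (mem_support_iff.mpr hne)
  rw [deg2'] at hle
  have had : (d + e : Fin 2 →₀ ℕ) 0 = d 0 + e 0 := rfl
  have hae : (d + e : Fin 2 →₀ ℕ) 1 = d 1 + e 1 := rfl
  omega

private lemma totalDegree_pderiv_lt' {q : MvPolynomial (Fin 2) ℂ} {i : Fin 2}
    (h : pderiv i q ≠ 0) : (pderiv i q).totalDegree < q.totalDegree := by
  classical
  obtain ⟨d, hd, hde⟩ := Finset.exists_mem_eq_sup (pderiv i q).support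
    (support_nonempty.mpr h) (fun s => s.sum fun _ e => e)
  have hdc : coeff d (pderiv i q) ≠ 0 := mem_support_iff.mp hd
  have hq : coeff (d + Finsupp.single i 1) q ≠ 0 := by
    intro hz
    rw [coeff_pderiv', hz, mul_zero] at hdc
    exact hdc rfl
  have hle := le_totalDegree (mem_support_iff.mpr hq)
  rw [deg2'] at hle
  have hsum : (d + Finsupp.single i 1 : Fin 2 →₀ ℕ) 0 + (d + Finsupp.single i 1 : Fin 2 →₀ ℕ) 1
      = d 0 + d 1 + 1 := by
    have h0 : (d + Finsupp.single i 1 : Fin 2 →₀ ℕ) 0 = d 0 + Finsupp.single i 1 0 := rfl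
    have h1 : (d + Finsupp.single i 1 : Fin 2 →₀ ℕ) 1 = d 1 + Finsupp.single i 1 1 := rfl
    have : Finsupp.single i 1 0 + Finsupp.single i (1:ℕ) 1 = 1 := by
      fin_cases i <;> simp [Finsupp.single_apply]
    omega
  have htd : (pderiv i q).totalDegree = d 0 + d 1 := by rw [← deg2', ← hde]; rfl
  omega

private lemma pderiv_eq_zero_of_self_dvd' {q : MvPolynomial (Fin 2) ℂ} {i : Fin 2}
    (hq : q ≠ 0) (h : q ∣ pderiv i q) : pderiv i q = 0 := by
  by_contra hne
  obtain ⟨t, ht⟩ := h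
  have htne : t ≠ 0 := by rintro rfl; rw [mul_zero] at ht; exact hne ht
  have h1 := le_totalDegree_mul' hq htne
  rw [← ht] at h1
  have h2 := totalDegree_pderiv_lt' hne
  omega

/-- For nonzero homogeneous `P, Q ∈ ℂ[x,y]` of degrees `m, n > 0` with
identically vanishing Jacobian `P_x Q_y − P_y Q_x ≡ 0`, we have `P^n = c·Q^m` for some
`c ∈ ℂ*`. -/
theorem stmt_16 (P Q : MvPolynomial (Fin 2) ℂ) (m n : ℕ) (hm : 0 < m) (hn : 0 < n)
    (hP : P.IsHomogeneous m) (hQ : Q.IsHomogeneous n) (hP0 : P ≠ 0) (hQ0 : Q ≠ 0)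
    (hJ : pderiv 0 P * pderiv 1 Q - pderiv 1 P * pderiv 0 Q = 0) :
    ∃ c : ℂ, c ≠ 0 ∧ P ^ n = C c * Q ^ m := by
  classical
  letI : GCDMonoid (MvPolynomial (Fin 2) ℂ) :=
    UniqueFactorizationMonoid.toGCDMonoid (MvPolynomial (Fin 2) ℂ)
  obtain ⟨m', rfl⟩ : ∃ m', m = m' + 1 := ⟨m - 1, by omega⟩
  obtain ⟨n', rfl⟩ : ∃ n', n = n' + 1 := ⟨n - 1, by omega⟩
  have eP := euler' hP
  have eQ := euler' hQ
  have h0 : C ((m' + 1 : ℕ) : ℂ) * P * pderiv 0 Q = C ((n' + 1 : ℕ) : ℂ) * Q * pderiv 0 P := by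
    linear_combination (-(pderiv 0 Q)) * eP + (pderiv 0 P) * eQ - X 1 * hJ
  have h1 : C ((m' + 1 : ℕ) : ℂ) * P * pderiv 1 Q = C ((n' + 1 : ℕ) : ℂ) * Q * pderiv 1 P := by
    linear_combination (-(pderiv 1 Q)) * eP + (pderiv 1 P) * eQ + X 0 * hJ
  have keyF : ∀ i : Fin 2, (P ^ (n' + 1)) * pderiv i (Q ^ (m' + 1))
      = (Q ^ (m' + 1)) * pderiv i (P ^ (n' + 1)) := by
    intro i
    rw [pderiv_pow, pderiv_pow]
    simp only [Nat.add_sub_cancel]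
    rw [show ((m' + 1 : ℕ) : MvPolynomial (Fin 2) ℂ) = C ((m' + 1 : ℕ) : ℂ) from
      (map_natCast MvPolynomial.C _).symm]
    rw [show ((n' + 1 : ℕ) : MvPolynomial (Fin 2) ℂ) = C ((n' + 1 : ℕ) : ℂ) from
      (map_natCast MvPolynomial.C _).symm]
    have hi : C ((m' + 1 : ℕ) : ℂ) * P * pderiv i Q = C ((n' + 1 : ℕ) : ℂ) * Q * pderiv i P := by
      fin_cases i
      · exact h0
      · exact h1
    linear_combination (P ^ n' * Q ^ m') * hi
  have hF0 : P ^ (n' + 1) ≠ 0 := pow_ne_zero _ hP0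
  have hG0 : Q ^ (m' + 1) ≠ 0 := pow_ne_zero _ hQ0
  obtain ⟨F1, G1, hF, hG, hu⟩ := extract_gcd (P ^ (n' + 1)) (Q ^ (m' + 1))
  set D := gcd (P ^ (n' + 1)) (Q ^ (m' + 1)) with hDdef
  have hDne : D ≠ 0 := fun h => hF0 (by rw [hF, h, zero_mul])
  have hF1ne : F1 ≠ 0 := fun h => hF0 (by rw [hF, h, mul_zero])
  have hG1ne : G1 ≠ 0 := fun h => hG0 (by rw [hG, h, mul_zero])
  have key1 : ∀ i : Fin 2, F1 * pderiv i G1 = G1 * pderiv i F1 := by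
    intro i
    have k := keyF i
    rw [hF, hG, pderiv_mul, pderiv_mul] at k
    have k2 : D * D * (F1 * pderiv i G1) = D * D * (G1 * pderiv i F1) := by
      linear_combination k
    exact mul_left_cancel₀ (mul_ne_zero hDne hDne) k2
  have hrel : IsRelPrime F1 G1 := gcd_isUnit_iff_isRelPrime.mp hu
  have hGz : ∀ i : Fin 2, pderiv i G1 = 0 := fun i =>
    pderiv_eq_zero_of_self_dvd' hG1ne
      (hrel.symm.dvd_of_dvd_mul_left ⟨pderiv i F1, key1 i⟩)
  have hFz : ∀ i : Fin 2, pderiv i F1 = 0 := fun i =>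
    pderiv_eq_zero_of_self_dvd' hF1ne
      (hrel.dvd_of_dvd_mul_left ⟨pderiv i G1, (key1 i).symm⟩)
  have hF1C := eq_C_of_pderiv' F1 (hFz 0) (hFz 1)
  have hG1C := eq_C_of_pderiv' G1 (hGz 0) (hGz 1)
  set a := coeff 0 F1 with ha
  set b := coeff 0 G1 with hb
  have hane : a ≠ 0 := fun h => hF1ne (by rw [hF1C, h, map_zero])
  have hbne : b ≠ 0 := fun h => hG1ne (by rw [hG1C, h, map_zero])
  refine ⟨a * b⁻¹, mul_ne_zero hane (inv_ne_zero hbne), ?_⟩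
  rw [hF, hG, hF1C, hG1C]
  have hab : a * b⁻¹ * b = a := by field_simp
  calc D * C a = D * C (a * b⁻¹ * b) := by rw [hab]
    _ = C (a * b⁻¹) * (D * C b) := by rw [map_mul]; ring
end

section
/- Let f = (P,Q) : ℂ² → ℂ² with J(P,Q) a nonzero constant. If the non-proper value set A_f is non-empty, then deg P > 1 and deg Q > 1. -/
/-!
If `deg P ≤ 1`, then `P = a + b x + d y`, and the Jacobian condition says that `Q` has constant
derivative `c ≠ 0` in the direction `v = (-d, b)`, along which `P` is constant; hence
`Q(z + t v) = Q(z) + c t`. Choosing `w` with `b w₀ + d w₁ = 1`, in the coordinates `z = s w + t v`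
the map becomes the triangular map `(s, t) ↦ (a + s, Q(s w) + c t)`, which has an explicit
continuous inverse. So `f` is a closed embedding, hence proper, and `A_f` is empty. The case
`deg Q ≤ 1` follows by exchanging `P` and `Q`.
-/

open MvPolynomial Topology

namespace MvPolynomial

variable {σ R : Type*} [Fintype σ] [CommSemiring R]

theorem eq_C_add_sum_of_totalDegree_le_one {p : MvPolynomial σ R} (hp : p.totalDegree ≤ 1) :
    p = C (coeff 0 p) + ∑ i, C (coeff (Finsupp.single i 1) p) * X i := by
  classical
  ext m
  simp only [coeff_add, coeff_C, coeff_sum, coeff_C_mul, coeff_X, mul_ite, mul_one, mul_zero]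
  obtain hm | hm | hm : m.sum (fun _ n => n) = 0 ∨ m.sum (fun _ n => n) = 1 ∨
      1 < m.sum (fun _ n => n) := by omega
  · obtain rfl : m = 0 := by ext i; simp_all [Finsupp.sum]
    simp
  · obtain ⟨a, rfl⟩ := (Finsupp.sum_eq_one_iff m).mp hm
    simp [Finsupp.single_left_inj one_ne_zero, (Finsupp.single_ne_zero.mpr one_ne_zero).symm]
  · have coeff_m : coeff m p = 0 :=
      coeff_eq_zero_of_totalDegree_lt (by simp only [Finsupp.sum] at hm; omega)
    rw [coeff_m, if_neg (by rintro rfl; simp at hm), zero_add]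
    refine (Finset.sum_eq_zero fun i _ => if_neg ?_).symm
    rintro rfl
    simp [Finsupp.sum_single_index] at hm

theorem derivative_aeval (g : σ → Polynomial R) (p : MvPolynomial σ R) :
    Polynomial.derivative (aeval g p) =
      ∑ i, aeval g (pderiv i p) * Polynomial.derivative (g i) := by
  classical
  induction p using MvPolynomial.induction_on with
  | C a => simp
  | add p q hp hq => simp only [map_add, hp, hq, add_mul, Finset.sum_add_distrib]
  | mul_X p i hp =>
    simp only [map_mul, aeval_X, Polynomial.derivative_mul, hp, pderiv_mul, pderiv_X,
      Pi.single_apply, map_add, mul_ite, mul_one, mul_zero, apply_ite (aeval g), map_zero, add_mul,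
      ite_mul, zero_mul, Finset.sum_add_distrib, Finset.sum_ite_eq, Finset.mem_univ, if_true,
      Finset.sum_mul]
    congr 1
    exact Finset.sum_congr rfl fun j _ => by ring

theorem eval_add_smul_of_sum_C_mul_pderiv_eq_C {K : Type*} [CommRing K] [IsAddTorsionFree K]
    {p : MvPolynomial σ K} {v : σ → K} {k : K}
    (h : ∑ i, C (v i) * pderiv i p = C k) (z : σ → K) (t : K) :
    eval (z + t • v) p = eval z p + k * t := by
  set g : σ → Polynomial K := fun i => Polynomial.C (z i) + Polynomial.C (v i) * Polynomial.X
  set r : Polynomial K := aeval g p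
  have eval_r : ∀ s : K, r.eval s = eval (z + s • v) p := by
    intro s
    rw [← Polynomial.coe_aeval_eq_eval, comp_aeval_apply]
    change eval _ p = _
    congr 2
    funext i
    simp only [g, map_add, map_mul, Polynomial.aeval_C, Polynomial.aeval_X, Pi.add_apply,
      Pi.smul_apply, smul_eq_mul, Algebra.algebraMap_self, RingHom.id_apply]
    ring
  have derivative_r : Polynomial.derivative r = Polynomial.C k := by
    have derivative_g : ∀ i, Polynomial.derivative (g i) = Polynomial.C (v i) := by simp [g]
    rw [derivative_aeval, ← Polynomial.algebraMap_eq, ← aeval_C g, ← h, map_sum]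
    simp only [derivative_g, map_mul, aeval_C, Polynomial.algebraMap_eq]
    exact Finset.sum_congr rfl fun i _ => mul_comm _ _
  have r_affine := Polynomial.eq_C_of_derivative_eq_zero (p := r - Polynomial.C k * Polynomial.X)
    (by simp [derivative_r])
  calc eval (z + t • v) p = r.eval t := (eval_r t).symm
    _ = r.eval 0 + k * t := by
      have := congrArg (Polynomial.eval t) r_affine
      simp only [Polynomial.eval_sub, Polynomial.eval_mul, Polynomial.eval_C, Polynomial.eval_X,
        Polynomial.coeff_zero_eq_eval_zero] at this
      linear_combination this
    _ = eval z p + k * t := by rw [eval_r, zero_smul, add_zero]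

end MvPolynomial

noncomputable def polyMap (P Q : MvPolynomial (Fin 2) ℂ) (z : ℂ × ℂ) : ℂ × ℂ :=
  (eval ![z.1, z.2] P, eval ![z.1, z.2] Q)

theorem isClosedEmbedding_polyMap_of_triangular {P Q : MvPolynomial (Fin 2) ℂ}
    {a b d c w₀ w₁ : ℂ} (hc : c ≠ 0) (hw : b * w₀ + d * w₁ = 1)
    (eval_P : ∀ x y, eval ![x, y] P = a + b * x + d * y)
    (eval_Q_line : ∀ x y t, eval ![x - t * d, y + t * b] Q = eval ![x, y] Q + c * t) :
    IsClosedEmbedding (polyMap P Q) := by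
  set g : ℂ × ℂ → ℂ × ℂ := fun q =>
    let s := q.1 - a
    let t := (q.2 - eval ![s * w₀, s * w₁] Q) / c
    (s * w₀ - t * d, s * w₁ + t * b)
  refine Function.LeftInverse.isClosedEmbedding (f := g) ?_ ?_ ?_
  · rintro ⟨x, y⟩
    set s := b * x + d * y
    set t := w₀ * y - w₁ * x
    have hx : s * w₀ - t * d = x := by linear_combination x * hw
    have hy : s * w₁ + t * b = y := by linear_combination y * hw
    have hs : a + b * x + d * y - a = s := by ring
    have ht : (eval ![x, y] Q - eval ![s * w₀, s * w₁] Q) / c = t := by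
      rw [← hx, ← hy, eval_Q_line]
      field_simp
      ring
    simp only [g, polyMap, eval_P, hs, ht, hx, hy]
  · have : Continuous fun q : ℂ × ℂ => eval ![(q.1 - a) * w₀, (q.1 - a) * w₁] Q :=
      (continuous_eval Q).comp (by fun_prop)
    simp only [g]
    fun_prop
  · have continuous_eval_pair : ∀ R : MvPolynomial (Fin 2) ℂ,
        Continuous fun z : ℂ × ℂ => eval ![z.1, z.2] R :=
      fun R => (continuous_eval R).comp (by fun_prop)
    exact (continuous_eval_pair P).prodMk (continuous_eval_pair Q)

theorem isClosedEmbedding_polyMap_of_totalDegree_le_one {P Q : MvPolynomial (Fin 2) ℂ} {c : ℂ}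
    (hc : c ≠ 0) (hJ : pderiv 0 P * pderiv 1 Q - pderiv 1 P * pderiv 0 Q = C c)
    (hP : P.totalDegree ≤ 1) : IsClosedEmbedding (polyMap P Q) := by
  set a := coeff 0 P
  set b := coeff (Finsupp.single 0 1) P
  set d := coeff (Finsupp.single 1 1) P
  have P_affine : P = C a + C b * X 0 + C d * X 1 := by
    simpa [Fin.sum_univ_two, add_assoc] using eq_C_add_sum_of_totalDegree_le_one hP
  have hQ_dir : ∑ i, C (![-d, b] i) * pderiv i Q = C c := by
    have pderiv_P_zero : pderiv 0 P = C b := by rw [P_affine]; simp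
    have pderiv_P_one : pderiv 1 P = C d := by rw [P_affine]; simp
    rw [pderiv_P_zero, pderiv_P_one] at hJ
    simp only [Fin.sum_univ_two, Matrix.cons_val_zero, Matrix.cons_val_one, Matrix.cons_val_fin_one,
      C_neg]
    linear_combination hJ
  obtain ⟨w₀, w₁, hw⟩ : ∃ w₀ w₁, b * w₀ + d * w₁ = 1 := by
    by_cases hb : b = 0
    · have hd : d ≠ 0 := by
        intro hd
        simpa [hb, hd, hc] using hQ_dir.symm
      exact ⟨0, d⁻¹, by simp [hb, hd]⟩
    · exact ⟨b⁻¹, 0, by simp [hb]⟩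
  refine isClosedEmbedding_polyMap_of_triangular (a := a) hc hw
    (fun x y => by rw [P_affine]; simp) fun x y t => ?_
  have line : ![x - t * d, y + t * b] = ![x, y] + t • ![-d, b] := by
    ext i
    fin_cases i <;> simp [sub_eq_add_neg]
  rw [line, eval_add_smul_of_sum_C_mul_pderiv_eq_C hQ_dir]

theorem isProperMap_polyMap {P Q : MvPolynomial (Fin 2) ℂ} {c : ℂ} (hc : c ≠ 0)
    (hJ : pderiv 0 P * pderiv 1 Q - pderiv 1 P * pderiv 0 Q = C c)
    (hdeg : P.totalDegree ≤ 1 ∨ Q.totalDegree ≤ 1) : IsProperMap (polyMap P Q) := by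
  rcases hdeg with hP | hQ
  · exact (isClosedEmbedding_polyMap_of_totalDegree_le_one hc hJ hP).isProperMap
  · have hJ_swap : pderiv 0 Q * pderiv 1 P - pderiv 1 Q * pderiv 0 P = C (-c) := by
      rw [C_neg, ← hJ]
      ring
    have : polyMap P Q = Prod.swap ∘ polyMap Q P := rfl
    rw [this]
    exact (Homeomorph.prodComm ℂ ℂ).isProperMap.comp
      (isClosedEmbedding_polyMap_of_totalDegree_le_one (neg_ne_zero.mpr hc) hJ_swap hQ).isProperMap

/-- If `f = (P,Q) : ℂ² → ℂ²` has `J(P,Q)` a nonzero constant and the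
non-proper value set `A_f` is non-empty, then `deg P > 1` and `deg Q > 1`. -/
theorem stmt_17 (P Q : MvPolynomial (Fin 2) ℂ) (c : ℂ) (hc : c ≠ 0)
    (hJ : pderiv 0 P * pderiv 1 Q - pderiv 1 P * pderiv 0 Q = C c)
    (hne : {a : ℂ × ℂ | ∀ K : Set (ℂ × ℂ), IsCompact K → K ∈ nhds a →
      ¬ IsCompact ((fun z : ℂ × ℂ =>
        (eval ![z.1, z.2] P, eval ![z.1, z.2] Q)) ⁻¹' K)}.Nonempty) :
    1 < P.totalDegree ∧ 1 < Q.totalDegree := by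
  obtain ⟨a, ha⟩ := hne
  by_contra hdeg
  rw [not_and_or, not_lt, not_lt] at hdeg
  exact ha _ (isCompact_closedBall a 1) (Metric.closedBall_mem_nhds a one_pos)
    ((isProperMap_polyMap hc hJ hdeg).isCompact_preimage (isCompact_closedBall a 1))
end
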